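/- Let G ≤ GL_d(𝔽_q) be a matrix group, a ∈ GL_d(𝔽_q), and σ the automorphism of G given by σ(x) = a x a^{-1} (assume σ maps G to G). Define Φ : M_d(𝔽_q) → M_d(𝔽_q) by Φ(X) = g · a X a^{-1}, for a fixed g ∈ G. Then Φ is an invertible 𝔽_q-linear transformation of M_d(𝔽_q), and for every natural number t, ρ_{(g,1)^t}(1_G) = Φ^t(I_d). Hence the SDLP for (g, h) is equivalent to the Orbit Problem instance: find t with h = Φ^t(I_d). -/

import Mathlib

/-- Multiplication in the semidirect product `G ⋊_σ ℕ`: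
`(g,s)(g',s') = (g·σ^s(g'), s+s')`. -/
def sdMulA {G : Type*} [Group G] (σ : MulAut G) (x y : G × ℕ) : G × ℕ :=
  (x.1 * (σ ^ x.2) y.1, x.2 + y.2)

/-- The `t`-th power in the semidirect product `G ⋊_σ ℕ`. -/
def sdPowA {G : Type*} [Group G] (σ : MulAut G) (x : G × ℕ) : ℕ → G × ℕ
  | 0 => (1, 0)
  | t + 1 => sdMulA σ x (sdPowA σ x t)

/-- The transformation `ρ_{(g,s)} : G → G`, `x ↦ g·σ^s(x)`. -/
def rhoA {G : Type*} [Group G] (σ : MulAut G) (x : G × ℕ) : G → G :=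
  fun z => x.1 * (σ ^ x.2) z

/-- The linear map `Φ : M_d(𝔽_q) → M_d(𝔽_q)`, `Φ(X) = g·(a X a⁻¹)`. -/
def PhiMap {d : ℕ} {F : Type*} [Field F]
    (a g : (Matrix (Fin d) (Fin d) F)ˣ) :
    Matrix (Fin d) (Fin d) F → Matrix (Fin d) (Fin d) F :=
  fun X => (g : Matrix (Fin d) (Fin d) F) *
    ((a : Matrix (Fin d) (Fin d) F) * X * ((a⁻¹ : (Matrix (Fin d) (Fin d) F)ˣ) : Matrix (Fin d) (Fin d) F))

/-!
`ρ` turns the semidirect-product multiplication into composition, so `ρ_{(g,1)^t} = ρ_{(g,1)}^t`.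
For `σ = conj a`, the coercion `GL_d(F) → M_d(F)` intertwines `ρ_{(g,1)}` with `Φ`, hence also
their iterates; and `Φ` is a composite of multiplications by units, hence bijective.
-/

section SemidirectProduct

variable {G : Type*} [Group G] (σ : MulAut G)

theorem rhoA_sdMulA (x y : G × ℕ) : rhoA σ (sdMulA σ x y) = rhoA σ x ∘ rhoA σ y := by
  funext z
  simp only [rhoA, sdMulA, Function.comp_apply, pow_add, MulAut.mul_apply, map_mul, mul_assoc]

theorem rhoA_sdPowA (x : G × ℕ) (t : ℕ) : rhoA σ (sdPowA σ x t) = (rhoA σ x)^[t] := by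
  induction t with
  | zero => funext z; simp [rhoA, sdPowA]
  | succ t ih => rw [sdPowA, rhoA_sdMulA, ih, Function.iterate_succ']

end SemidirectProduct

section PhiMap

variable {d : ℕ} {F : Type*} [Field F] (a g : (Matrix (Fin d) (Fin d) F)ˣ)

theorem isLinearMap_phiMap : IsLinearMap F (PhiMap a g) where
  map_add X Y := by simp only [PhiMap, Matrix.mul_add, Matrix.add_mul]
  map_smul c X := by simp only [PhiMap, Matrix.mul_smul, Matrix.smul_mul]

theorem phiMap_eq_comp :
    PhiMap a g = Units.mulLeft g ∘ Units.mulRight a⁻¹ ∘ Units.mulLeft a :=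
  rfl

theorem bijective_phiMap : Function.Bijective (PhiMap a g) := by
  rw [phiMap_eq_comp]
  exact (Equiv.bijective _).comp ((Equiv.bijective _).comp (Equiv.bijective _))

theorem semiconj_val_rhoA_conj :
    Function.Semiconj Units.val (rhoA (MulAut.conj a) (g, 1)) (PhiMap a g) := fun u => by
  simp [rhoA, PhiMap, mul_assoc]

end PhiMap

theorem sdlp_orbit_problem_general {d : ℕ} {F : Type*} [Field F]
    (a : (Matrix (Fin d) (Fin d) F)ˣ)
    (g : (Matrix (Fin d) (Fin d) F)ˣ) :
    IsLinearMap F (PhiMap a g) ∧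
    Function.Bijective (PhiMap a g) ∧
    ∀ t : ℕ,
      ((rhoA (MulAut.conj a) (sdPowA (MulAut.conj a) (g, 1) t) 1 :
          (Matrix (Fin d) (Fin d) F)ˣ) : Matrix (Fin d) (Fin d) F)
        = (PhiMap a g)^[t] 1 := by
  refine ⟨isLinearMap_phiMap a g, bijective_phiMap a g, fun t => ?_⟩
  rw [rhoA_sdPowA, ← Units.val_one]
  exact (semiconj_val_rhoA_conj a g).iterate_right t 1

/-- for a matrix group `G ≤ GL_d(𝔽_q)`, `σ(x) = a x a⁻¹` mapping `G` to `G`,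
and `g ∈ G`, the map `Φ(X) = g·a X a⁻¹` is an invertible `𝔽_q`-linear transformation of
`M_d(𝔽_q)` and `ρ_{(g,1)^t}(1_G) = Φ^t(I_d)` for all `t`; hence the SDLP is an instance
of the Orbit Problem. -/
theorem sdlp_orbit_problem {d : ℕ} {F : Type*} [Field F] [Fintype F]
    (Gr : Subgroup (Matrix (Fin d) (Fin d) F)ˣ)
    (a : (Matrix (Fin d) (Fin d) F)ˣ)
    (hσ : ∀ x ∈ Gr, a * x * a⁻¹ ∈ Gr)
    (g : (Matrix (Fin d) (Fin d) F)ˣ) (hg : g ∈ Gr) :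
    IsLinearMap F (PhiMap a g) ∧
    Function.Bijective (PhiMap a g) ∧
    ∀ t : ℕ,
      ((rhoA (MulAut.conj a) (sdPowA (MulAut.conj a) (g, 1) t) 1 :
          (Matrix (Fin d) (Fin d) F)ˣ) : Matrix (Fin d) (Fin d) F)
        = (PhiMap a g)^[t] 1 :=
  sdlp_orbit_problem_general a g
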